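/- Suppose f is twice continuously differentiable, X ∈ S_{n,p} satisfies grad f(X) = 0, and the Hessian of g at X has operator norm at most M₂. Define the Riemannian Hessian hess f(X) : T_X → T_X by hess f(X)[D] := P_X( Hf(X)[D] − D·Φ(Xᵀ∇f(X)) ), where P_X(W) := W − X·Φ(Xᵀ·W). Then: (i) if σ ∈ ℝ and D ∈ T_X with D ≠ 0 satisfy hess f(X)[D] = σ·D, then Hh(X)[D] = σ·D, so σ is an eigenvalue of Hh(X); (ii) conversely, if σ ∈ ℝ admits D ∈ ℝ^{n×p}, D ≠ 0, with Hh(X)[D] = σ·D, then either there exists a nonzero D' ∈ T_X with hess f(X)[D'] = σ·D', or σ ≥ 2β − M₂. -/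

import Mathlib

/-!
The map `c(Y) := Y * Amap Y` has a self-adjoint derivative `c'(Y)`, so `∇g(Y) = c'(Y)[∇f(c(Y))]`;
differentiating once more at `X ∈ S_{n,p}`, where `c(X) = X` and `c'(X) = P_X`, gives
`Hg(X)[D] = P_X(Hf(X)[P_X D]) + c''(X)[D, ∇f(X)]`, and the penalty adds `2β X Φ(XᵀD)`.
At a critical point `∇f(X) = X S` with `S` symmetric; then `Hh(X)` coincides with `hess f(X)` on
`T_X` and maps the normal space `{X N | Nᵀ = N}` into itself. So the tangent component of an
eigenvector of `Hh(X)` is an eigenvector of `hess f(X)` unless it vanishes, in which case the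
eigenvector is normal, `Hh(X) = Hg(X) + 2β` on it, and `σ ≥ 2β - ‖Hg(X)‖`.
-/

open Matrix

attribute [local instance] Matrix.frobeniusNormedAddCommGroup Matrix.frobeniusNormedSpace

/-- The old Mathlib (Dec 2024) `Matrix.PosSemidef.sqrt`, removed since; restored verbatim. -/
noncomputable def Matrix.PosSemidef.sqrt {n 𝕜 : Type*} [Fintype n] [RCLike 𝕜] [PartialOrder 𝕜] [DecidableEq n]
    {A : Matrix n n 𝕜} (hA : A.PosSemidef) : Matrix n n 𝕜 :=
  hA.1.eigenvectorUnitary.1 * diagonal ((↑) ∘ Real.sqrt ∘ hA.1.eigenvalues) *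
  (star hA.1.eigenvectorUnitary : Matrix n n 𝕜)

namespace ExPen

noncomputable def finner {n p : ℕ} (A B : Matrix (Fin n) (Fin p) ℝ) : ℝ := (Aᵀ * B).trace

noncomputable def Phi {p : ℕ} (M : Matrix (Fin p) (Fin p) ℝ) : Matrix (Fin p) (Fin p) ℝ :=
  (1 / 2 : ℝ) • (M + Mᵀ)

noncomputable def Amap {n p : ℕ} (X : Matrix (Fin n) (Fin p) ℝ) : Matrix (Fin p) (Fin p) ℝ :=
  (3 / 2 : ℝ) • (1 : Matrix (Fin p) (Fin p) ℝ) - (1 / 2 : ℝ) • (Xᵀ * X)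

noncomputable def g {n p : ℕ} (f : Matrix (Fin n) (Fin p) ℝ → ℝ)
    (X : Matrix (Fin n) (Fin p) ℝ) : ℝ := f (X * Amap X)

noncomputable def hpen {n p : ℕ} (f : Matrix (Fin n) (Fin p) ℝ → ℝ) (β : ℝ)
    (X : Matrix (Fin n) (Fin p) ℝ) : ℝ := g f X + β / 4 * ‖Xᵀ * X - 1‖ ^ 2

noncomputable def dualCLM {n p : ℕ} (G : Matrix (Fin n) (Fin p) ℝ) :
    Matrix (Fin n) (Fin p) ℝ →L[ℝ] ℝ :=
  LinearMap.toContinuousLinearMap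
    { toFun := fun D => (Gᵀ * D).trace
      map_add' := by intro D E; simp [Matrix.mul_add]
      map_smul' := by intro c D; simp [Matrix.mul_smul] }

def HasGradAt {n p : ℕ} (φ : Matrix (Fin n) (Fin p) ℝ → ℝ)
    (X G : Matrix (Fin n) (Fin p) ℝ) : Prop :=
  HasFDerivAt φ (dualCLM G) X

noncomputable def specNorm {n p : ℕ} (X : Matrix (Fin n) (Fin p) ℝ) : ℝ :=
  ‖LinearMap.toContinuousLinearMap
    (Matrix.toEuclideanLin X : EuclideanSpace ℝ (Fin p) →ₗ[ℝ] EuclideanSpace ℝ (Fin n))‖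

lemma posSemidef_tmul {n p : ℕ} (X : Matrix (Fin n) (Fin p) ℝ) : (Xᵀ * X).PosSemidef := by
  simpa [Matrix.conjTranspose_eq_transpose_of_trivial] using
    Matrix.posSemidef_conjTranspose_mul_self X

noncomputable def Pst {n p : ℕ} (X : Matrix (Fin n) (Fin p) ℝ) : Matrix (Fin n) (Fin p) ℝ :=
  X * ((posSemidef_tmul X).sqrt)⁻¹

section

section MatrixCalculus

variable {l m k : Type*} [Fintype l] [Fintype m] [Fintype k] {t : ℝ}

theorem _root_.HasDerivAt.matrix_mul {u : ℝ → Matrix l m ℝ} {v : ℝ → Matrix m k ℝ}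
    {u' : Matrix l m ℝ} {v' : Matrix m k ℝ} (hu : HasDerivAt u u' t) (hv : HasDerivAt v v' t) :
    HasDerivAt (fun t => u t * v t) (u' * v t + u t * v') t := by
  have h := ((mulLinearMap ℝ).toContinuousBilinearMap :
    Matrix l m ℝ →L[ℝ] Matrix m k ℝ →L[ℝ] Matrix l k ℝ).hasDerivAt_of_bilinear
      (fun _ => hu) (fun _ => hv)
  exact h.congr_deriv (add_comm _ _)

theorem _root_.HasDerivAt.matrix_transpose {u : ℝ → Matrix l m ℝ} {u' : Matrix l m ℝ}
    (hu : HasDerivAt u u' t) : HasDerivAt (fun t => (u t)ᵀ) u'ᵀ t :=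
  (transposeLinearEquiv l m ℝ ℝ).toLinearMap.toContinuousLinearMap.hasFDerivAt.comp_hasDerivAt t hu

theorem _root_.HasDerivAt.matrix_trace {u : ℝ → Matrix m m ℝ} {u' : Matrix m m ℝ}
    (hu : HasDerivAt u u' t) : HasDerivAt (fun t => (u t).trace) u'.trace t :=
  (traceLinearMap m ℝ ℝ).toContinuousLinearMap.hasFDerivAt.comp_hasDerivAt t hu

theorem hasDerivAt_line (Y D : Matrix l m ℝ) : HasDerivAt (fun t : ℝ => Y + t • D) D 0 :=
  (((hasDerivAt_id' (0 : ℝ)).smul_const D).const_add Y).congr_deriv (one_smul ℝ D)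

theorem frobenius_norm_sq_eq_trace (A : Matrix l m ℝ) : ‖A‖ ^ 2 = (Aᵀ * A).trace := by
  rw [frobenius_norm_def, ← Real.sqrt_eq_rpow, Real.sq_sqrt (by positivity)]
  simp [Matrix.trace, Matrix.mul_apply, sq]
  exact Finset.sum_comm

end MatrixCalculus

theorem abs_le_opNorm_of_apply_eq_smul {E : Type*} [NormedAddCommGroup E] [NormedSpace ℝ E]
    {T : E →L[ℝ] E} {x : E} {μ : ℝ} (hx : x ≠ 0) (h : T x = μ • x) : |μ| ≤ ‖T‖ := by
  have hle := T.le_opNorm x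
  rw [h, norm_smul, Real.norm_eq_abs] at hle
  exact le_of_mul_le_mul_right hle (norm_pos_iff.mpr hx)

variable {n p : ℕ}

theorem Phi_transpose (M : Matrix (Fin p) (Fin p) ℝ) : Phi Mᵀ = Phi M := by
  simp [Phi, add_comm]

theorem transpose_Phi (M : Matrix (Fin p) (Fin p) ℝ) : (Phi M)ᵀ = Phi M := by
  simp [Phi, add_comm]

theorem Phi_of_transpose_eq {M : Matrix (Fin p) (Fin p) ℝ} (h : Mᵀ = M) : Phi M = M := by
  rw [Phi, h]; module

theorem Phi_sub (M N : Matrix (Fin p) (Fin p) ℝ) : Phi (M - N) = Phi M - Phi N := by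
  simp only [Phi, transpose_sub]; module

theorem Phi_smul (r : ℝ) (M : Matrix (Fin p) (Fin p) ℝ) : Phi (r • M) = r • Phi M := by
  simp only [Phi, transpose_smul]; module

theorem Phi_transpose_mul_comm (A B : Matrix (Fin n) (Fin p) ℝ) : Phi (Aᵀ * B) = Phi (Bᵀ * A) := by
  rw [← Phi_transpose, transpose_mul, transpose_transpose]

theorem finner_add_left (G H D : Matrix (Fin n) (Fin p) ℝ) :
    finner (G + H) D = finner G D + finner H D := by
  simp [finner, Matrix.add_mul]

theorem eq_of_forall_finner_eq {G G' : Matrix (Fin n) (Fin p) ℝ}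
    (h : ∀ D, finner G D = finner G' D) : G = G' := by
  have h0 : ((G - G')ᵀ * (G - G')).trace = 0 := by
    rw [transpose_sub, Matrix.sub_mul, trace_sub]
    exact sub_eq_zero.mpr (h (G - G'))
  rwa [← conjTranspose_eq_transpose_of_trivial, trace_conjTranspose_mul_self_eq_zero_iff,
    sub_eq_zero] at h0

theorem HasGradAt.hasLineDerivAt {φ : Matrix (Fin n) (Fin p) ℝ → ℝ} {Y G : Matrix (Fin n) (Fin p) ℝ}
    (h : HasGradAt φ Y G) (D : Matrix (Fin n) (Fin p) ℝ) : HasLineDerivAt ℝ φ (finner G D) Y D :=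
  HasFDerivAt.hasLineDerivAt h D

theorem HasGradAt.eq_of_hasLineDerivAt {φ : Matrix (Fin n) (Fin p) ℝ → ℝ}
    {Y G G' : Matrix (Fin n) (Fin p) ℝ} (h : HasGradAt φ Y G)
    (h' : ∀ D, HasLineDerivAt ℝ φ (finner G' D) Y D) : G = G' :=
  eq_of_forall_finner_eq fun D => (h.hasLineDerivAt D).unique (h' D)

theorem transpose_Amap (Y : Matrix (Fin n) (Fin p) ℝ) : (Amap Y)ᵀ = Amap Y := by
  simp [Amap]

noncomputable def mulAmapDeriv (Y D : Matrix (Fin n) (Fin p) ℝ) : Matrix (Fin n) (Fin p) ℝ :=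
  D * Amap Y - (1 / 2 : ℝ) • (Y * (Dᵀ * Y + Yᵀ * D))

noncomputable def mulAmapDeriv₂ (Y E F : Matrix (Fin n) (Fin p) ℝ) : Matrix (Fin n) (Fin p) ℝ :=
  -(1 / 2 : ℝ) • (F * (Eᵀ * Y + Yᵀ * E) + E * (Fᵀ * Y + Yᵀ * F) + Y * (Fᵀ * E + Eᵀ * F))

section Curves

variable {u v : ℝ → Matrix (Fin n) (Fin p) ℝ} {u' v' : Matrix (Fin n) (Fin p) ℝ} {t : ℝ}

theorem hasDerivAt_Amap (hu : HasDerivAt u u' t) :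
    HasDerivAt (fun t => Amap (u t)) (-(1 / 2 : ℝ) • (u'ᵀ * u t + (u t)ᵀ * u')) t := by
  have h := ((hu.matrix_transpose.matrix_mul hu).const_smul (1 / 2 : ℝ)).const_sub
    ((3 / 2 : ℝ) • (1 : Matrix (Fin p) (Fin p) ℝ))
  exact h.congr_deriv (neg_smul _ _).symm

theorem hasDerivAt_mul_Amap (hu : HasDerivAt u u' t) :
    HasDerivAt (fun t => u t * Amap (u t)) (mulAmapDeriv (u t) u') t := by
  refine (hu.matrix_mul (hasDerivAt_Amap hu)).congr_deriv ?_
  rw [mulAmapDeriv, Matrix.mul_smul, sub_eq_add_neg, neg_smul]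

theorem hasDerivAt_mulAmapDeriv (hu : HasDerivAt u u' t) (hv : HasDerivAt v v' t) :
    HasDerivAt (fun t => mulAmapDeriv (u t) (v t))
      (mulAmapDeriv (u t) v' + mulAmapDeriv₂ (u t) u' (v t)) t := by
  have hsum := hv.matrix_transpose.matrix_mul hu |>.add (hu.matrix_transpose.matrix_mul hv)
  have h := (hv.matrix_mul (hasDerivAt_Amap hu)).sub ((hu.matrix_mul hsum).const_smul (1 / 2 : ℝ))
  refine h.congr_deriv ?_
  simp only [mulAmapDeriv, mulAmapDeriv₂, Pi.add_apply, Matrix.mul_add, Matrix.mul_smul]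
  module

end Curves

theorem finner_mulAmapDeriv_comm (Y G D : Matrix (Fin n) (Fin p) ℝ) :
    finner G (mulAmapDeriv Y D) = finner (mulAmapDeriv Y G) D := by
  simp only [mulAmapDeriv, finner, transpose_sub, transpose_smul, transpose_mul, transpose_add,
    transpose_transpose, transpose_Amap, Matrix.mul_sub, Matrix.mul_smul, Matrix.mul_add,
    Matrix.sub_mul, Matrix.smul_mul, Matrix.add_mul, trace_sub, trace_smul, trace_add,
    Matrix.mul_assoc]
  have hA : (Gᵀ * (D * Amap Y)).trace = (Amap Y * (Gᵀ * D)).trace := by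
    rw [← Matrix.mul_assoc, trace_mul_comm]
  have hY : (Gᵀ * (Y * (Dᵀ * Y))).trace = (Yᵀ * (G * (Yᵀ * D))).trace := by
    rw [← trace_transpose, transpose_mul, transpose_mul, transpose_mul, transpose_transpose,
      transpose_transpose, Matrix.mul_assoc, trace_mul_comm, Matrix.mul_assoc]
  rw [hA, hY]

theorem HasGradAt.eq_mulAmapDeriv {f : Matrix (Fin n) (Fin p) ℝ → ℝ}
    {gradf : Matrix (Fin n) (Fin p) ℝ → Matrix (Fin n) (Fin p) ℝ}
    (hgradf : ∀ Y, HasGradAt f Y (gradf Y)) {Y G : Matrix (Fin n) (Fin p) ℝ}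
    (hg : HasGradAt (g f) Y G) : G = mulAmapDeriv Y (gradf (Y * Amap Y)) := by
  refine hg.eq_of_hasLineDerivAt fun D => ?_
  have hc := hasDerivAt_mul_Amap (hasDerivAt_line Y D)
  have h := (hgradf (Y * Amap Y)).comp_hasDerivAt_of_eq 0 hc (by simp)
  simp only [zero_smul, add_zero] at h
  rw [← finner_mulAmapDeriv_comm]
  exact h

theorem hasLineDerivAt_penalty (β : ℝ) (Y D : Matrix (Fin n) (Fin p) ℝ) :
    HasLineDerivAt ℝ (fun Z : Matrix (Fin n) (Fin p) ℝ => β / 4 * ‖Zᵀ * Z - 1‖ ^ 2)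
      (finner (β • (Y * (Yᵀ * Y - 1))) D) Y D := by
  have hℓ := hasDerivAt_line Y D
  have hW := (hℓ.matrix_transpose.matrix_mul hℓ).sub_const 1
  have h := ((hW.matrix_transpose.matrix_mul hW).matrix_trace).const_mul (β / 4)
  simp only [zero_smul, add_zero] at h
  unfold HasLineDerivAt
  simp only [frobenius_norm_sq_eq_trace]
  refine h.congr_deriv ?_
  set W := Yᵀ * Y - 1
  have hW : Wᵀ = W := by simp [W]
  have hS : (Dᵀ * Y + Yᵀ * D)ᵀ = Dᵀ * Y + Yᵀ * D := by simp [add_comm]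
  have hWS : (W * (Dᵀ * Y)).trace = (W * (Yᵀ * D)).trace := by
    rw [← trace_transpose, transpose_mul, transpose_mul, transpose_transpose, hW, trace_mul_comm]
  rw [hW, hS, trace_add, trace_mul_comm _ W, Matrix.mul_add, trace_add, hWS]
  simp only [finner, transpose_smul, transpose_mul, hW, Matrix.smul_mul, trace_smul,
    Matrix.mul_assoc, smul_eq_mul]
  ring

theorem HasGradAt.eq_add_penalty {f : Matrix (Fin n) (Fin p) ℝ → ℝ} {β : ℝ}
    {Y G H : Matrix (Fin n) (Fin p) ℝ} (hg : HasGradAt (g f) Y G)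
    (hh : HasGradAt (hpen f β) Y H) : H = G + β • (Y * (Yᵀ * Y - 1)) :=
  hh.eq_of_hasLineDerivAt fun D => by
    rw [finner_add_left]
    exact (hg.hasLineDerivAt D).add (hasLineDerivAt_penalty β Y D)

noncomputable def tangentProj (X W : Matrix (Fin n) (Fin p) ℝ) : Matrix (Fin n) (Fin p) ℝ :=
  W - X * Phi (Xᵀ * W)

section StiefelPoint

variable {X : Matrix (Fin n) (Fin p) ℝ}

theorem transpose_mul_mul_cancel (hX : Xᵀ * X = 1) {k : Type*} (A : Matrix (Fin p) k ℝ) :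
    Xᵀ * (X * A) = A := by
  rw [← Matrix.mul_assoc, hX, Matrix.one_mul]

theorem mul_Amap_of_stiefel (hX : Xᵀ * X = 1) : X * Amap X = X := by
  rw [Amap, hX, Matrix.mul_sub, Matrix.mul_smul, Matrix.mul_smul, Matrix.mul_one]
  module

theorem hessian_g_apply {gradf gradg : Matrix (Fin n) (Fin p) ℝ → Matrix (Fin n) (Fin p) ℝ}
    {Hf Hg : Matrix (Fin n) (Fin p) ℝ →L[ℝ] Matrix (Fin n) (Fin p) ℝ} (hX : Xᵀ * X = 1)
    (hgradg : ∀ Y, gradg Y = mulAmapDeriv Y (gradf (Y * Amap Y)))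
    (hHf : HasFDerivAt gradf Hf X) (hHg : HasFDerivAt gradg Hg X) (D : Matrix (Fin n) (Fin p) ℝ) :
    Hg D = mulAmapDeriv X (Hf (mulAmapDeriv X D)) + mulAmapDeriv₂ X D (gradf X) := by
  have hℓ := hasDerivAt_line X D
  have hG := hHf.comp_hasDerivAt_of_eq 0 (hasDerivAt_mul_Amap hℓ)
    (by simp [mul_Amap_of_stiefel hX])
  have h := hasDerivAt_mulAmapDeriv hℓ hG
  simp only [zero_smul, add_zero, Function.comp_apply, mul_Amap_of_stiefel hX] at h
  refine (hHg.hasLineDerivAt D).unique ?_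
  unfold HasLineDerivAt
  simp only [hgradg]
  exact h

theorem hessian_hpen_apply {gradg gradh : Matrix (Fin n) (Fin p) ℝ → Matrix (Fin n) (Fin p) ℝ}
    {Hg Hh : Matrix (Fin n) (Fin p) ℝ →L[ℝ] Matrix (Fin n) (Fin p) ℝ} {β : ℝ} (hX : Xᵀ * X = 1)
    (hgradh : ∀ Y, gradh Y = gradg Y + β • (Y * (Yᵀ * Y - 1)))
    (hHg : HasFDerivAt gradg Hg X) (hHh : HasFDerivAt gradh Hh X) (D : Matrix (Fin n) (Fin p) ℝ) :
    Hh D = Hg D + (2 * β) • (X * Phi (Xᵀ * D)) := by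
  have hℓ := hasDerivAt_line X D
  have hpen := (hℓ.matrix_mul ((hℓ.matrix_transpose.matrix_mul hℓ).sub_const 1)).const_smul β
  have h := HasDerivAt.add (hHg.hasLineDerivAt D) hpen
  refine (hHh.hasLineDerivAt D).unique ?_
  unfold HasLineDerivAt
  simp only [hgradh]
  refine h.congr_deriv ?_
  simp only [zero_smul, add_zero, hX, sub_self, Matrix.mul_zero, zero_add, Phi, transpose_mul,
    transpose_transpose, Matrix.mul_smul, Matrix.mul_add]
  module

theorem tangentProj_of_Phi_eq_zero {W : Matrix (Fin n) (Fin p) ℝ} (hW : Phi (Xᵀ * W) = 0) :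
    tangentProj X W = W := by
  rw [tangentProj, hW, Matrix.mul_zero, sub_zero]

theorem Phi_mul_tangentProj (hX : Xᵀ * X = 1) (W : Matrix (Fin n) (Fin p) ℝ) :
    Phi (Xᵀ * tangentProj X W) = 0 := by
  rw [tangentProj, Matrix.mul_sub, transpose_mul_mul_cancel hX, Phi_sub,
    Phi_of_transpose_eq (transpose_Phi _), sub_self]

theorem tangentProj_mul_of_transpose_eq (hX : Xᵀ * X = 1) {N : Matrix (Fin p) (Fin p) ℝ}
    (hN : Nᵀ = N) : tangentProj X (X * N) = 0 := by
  rw [tangentProj, transpose_mul_mul_cancel hX, Phi_of_transpose_eq hN, sub_self]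

theorem mulAmapDeriv_of_stiefel (hX : Xᵀ * X = 1) (D : Matrix (Fin n) (Fin p) ℝ) :
    mulAmapDeriv X D = tangentProj X D := by
  rw [mulAmapDeriv, tangentProj, Amap, hX, Phi, transpose_mul, transpose_transpose]
  simp only [Matrix.mul_sub, Matrix.mul_smul, Matrix.mul_one, Matrix.mul_add]
  module

theorem mulAmapDeriv₂_of_Phi_eq_zero (hX : Xᵀ * X = 1) {S : Matrix (Fin p) (Fin p) ℝ}
    (hS : Sᵀ = S) {D : Matrix (Fin n) (Fin p) ℝ} (hD : Phi (Xᵀ * D) = 0) :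
    mulAmapDeriv₂ X D (X * S) = tangentProj X (-(D * S)) := by
  have hK : Dᵀ * X = -(Xᵀ * D) := by
    rw [Phi, smul_eq_zero_iff_right (by norm_num), add_comm, add_eq_zero_iff_eq_neg,
      transpose_mul, transpose_transpose] at hD
    exact hD
  have hKS : Dᵀ * (X * S) = -(Xᵀ * D * S) := by rw [← Matrix.mul_assoc, hK, Matrix.neg_mul]
  simp only [mulAmapDeriv₂, tangentProj, Phi, transpose_mul, transpose_neg, transpose_transpose,
    hS, hK, hKS, Matrix.mul_assoc, transpose_mul_mul_cancel hX, hX, Matrix.mul_one,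
    neg_add_cancel, Matrix.mul_zero, zero_add, Matrix.mul_neg, Matrix.mul_add,
    Matrix.mul_smul]
  module

theorem mulAmapDeriv₂_mul_of_transpose_eq (hX : Xᵀ * X = 1) {S N : Matrix (Fin p) (Fin p) ℝ}
    (hS : Sᵀ = S) (hN : Nᵀ = N) :
    mulAmapDeriv₂ X (X * N) (X * S) = X * (-(3 / 2 : ℝ) • (S * N + N * S)) := by
  simp only [mulAmapDeriv₂, transpose_mul, hS, hN, Matrix.mul_assoc, transpose_mul_mul_cancel hX,
    hX, Matrix.mul_one, Matrix.mul_add, Matrix.mul_smul]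
  module

theorem apply_tangentProj_eq_smul (hX : Xᵀ * X = 1)
    {T : Matrix (Fin n) (Fin p) ℝ →L[ℝ] Matrix (Fin n) (Fin p) ℝ}
    (hT_tangent : ∀ W, Phi (Xᵀ * W) = 0 → Phi (Xᵀ * T W) = 0)
    (hT_normal : ∀ N : Matrix (Fin p) (Fin p) ℝ, Nᵀ = N → tangentProj X (T (X * N)) = 0)
    {σ : ℝ} {D : Matrix (Fin n) (Fin p) ℝ} (hD : T D = σ • D) :
    T (tangentProj X D) = σ • tangentProj X D := by
  set N := Phi (Xᵀ * D)
  have hsplit : tangentProj X D + X * N = D := sub_add_cancel _ _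
  have hTD : T (tangentProj X D) = σ • D - T (X * N) := by
    rw [eq_sub_iff_add_eq, ← map_add, hsplit, hD]
  have hPhi := hT_tangent _ (Phi_mul_tangentProj hX D)
  rw [hTD, Matrix.mul_sub, Phi_sub, Matrix.mul_smul, Phi_smul, sub_eq_zero] at hPhi
  have hTN : T (X * N) = σ • (X * N) := by
    rw [sub_eq_zero.mp (hT_normal N (transpose_Phi _)), ← hPhi, Matrix.mul_smul]
  rw [hTD, hTN, ← smul_sub]
  rfl

section CriticalPoint

variable {Hf Hg Hh : Matrix (Fin n) (Fin p) ℝ →L[ℝ] Matrix (Fin n) (Fin p) ℝ}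
  {S : Matrix (Fin p) (Fin p) ℝ} {β : ℝ}

theorem hessian_hpen_of_Phi_eq_zero (hX : Xᵀ * X = 1) (hS : Sᵀ = S)
    (hHg : ∀ D, Hg D = tangentProj X (Hf (tangentProj X D)) + mulAmapDeriv₂ X D (X * S))
    (hHh : ∀ D, Hh D = Hg D + (2 * β) • (X * Phi (Xᵀ * D)))
    {D : Matrix (Fin n) (Fin p) ℝ} (hD : Phi (Xᵀ * D) = 0) :
    Hh D = tangentProj X (Hf D - D * S) := by
  rw [hHh, hHg, hD, tangentProj_of_Phi_eq_zero hD, mulAmapDeriv₂_of_Phi_eq_zero hX hS hD]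
  simp only [tangentProj, Phi, Matrix.mul_zero, smul_zero, add_zero, Matrix.mul_sub,
    Matrix.mul_neg, transpose_sub, transpose_neg, Matrix.mul_smul, Matrix.mul_add]
  module

theorem hessian_hpen_mul_of_transpose_eq (hX : Xᵀ * X = 1) (hS : Sᵀ = S)
    (hHg : ∀ D, Hg D = tangentProj X (Hf (tangentProj X D)) + mulAmapDeriv₂ X D (X * S))
    (hHh : ∀ D, Hh D = Hg D + (2 * β) • (X * Phi (Xᵀ * D)))
    {N : Matrix (Fin p) (Fin p) ℝ} (hN : Nᵀ = N) :
    Hh (X * N) = X * (-(3 / 2 : ℝ) • (S * N + N * S) + (2 * β) • N) := by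
  rw [hHh, hHg, tangentProj_mul_of_transpose_eq hX hN, map_zero,
    mulAmapDeriv₂_mul_of_transpose_eq hX hS hN, transpose_mul_mul_cancel hX,
    Phi_of_transpose_eq hN, Matrix.mul_add, Matrix.mul_smul, Matrix.mul_smul]
  simp [tangentProj, Phi]

end CriticalPoint

end StiefelPoint

end

theorem statement_10_general {n p : ℕ} (f : Matrix (Fin n) (Fin p) ℝ → ℝ) (β M₂ : ℝ)
    (gradf gradg gradh : Matrix (Fin n) (Fin p) ℝ → Matrix (Fin n) (Fin p) ℝ)
    (Hf : Matrix (Fin n) (Fin p) ℝ → Matrix (Fin n) (Fin p) ℝ →L[ℝ] Matrix (Fin n) (Fin p) ℝ)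
    (hgradf : ∀ Y, HasGradAt f Y (gradf Y))
    (hHf : ∀ Y, HasFDerivAt gradf (Hf Y) Y)
    (hgradg : ∀ Y, HasGradAt (g f) Y (gradg Y))
    (hgradh : ∀ Y, HasGradAt (hpen f β) Y (gradh Y))
    (X : Matrix (Fin n) (Fin p) ℝ) (hX : Xᵀ * X = 1)
    (hstat : gradf X - X * Phi (Xᵀ * gradf X) = 0)
    (Hg : Matrix (Fin n) (Fin p) ℝ →L[ℝ] Matrix (Fin n) (Fin p) ℝ)
    (hHg : HasFDerivAt gradg Hg X) (hM₂ : (ContinuousLinearMap.hasOpNorm (σ₁₂ := RingHom.id ℝ)).norm Hg ≤ M₂)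
    (Hh : Matrix (Fin n) (Fin p) ℝ →L[ℝ] Matrix (Fin n) (Fin p) ℝ)
    (hHh : HasFDerivAt gradh Hh X) :
    (∀ (σ : ℝ) (D : Matrix (Fin n) (Fin p) ℝ), Phi (Dᵀ * X) = 0 → D ≠ 0 →
      ((Hf X D - D * Phi (Xᵀ * gradf X))
          - X * Phi (Xᵀ * (Hf X D - D * Phi (Xᵀ * gradf X)))) = σ • D →
      Hh D = σ • D) ∧
    (∀ σ : ℝ, (∃ D : Matrix (Fin n) (Fin p) ℝ, D ≠ 0 ∧ Hh D = σ • D) →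
      (∃ D' : Matrix (Fin n) (Fin p) ℝ, D' ≠ 0 ∧ Phi (D'ᵀ * X) = 0 ∧
        ((Hf X D' - D' * Phi (Xᵀ * gradf X))
            - X * Phi (Xᵀ * (Hf X D' - D' * Phi (Xᵀ * gradf X)))) = σ • D') ∨
      2 * β - M₂ ≤ σ) := by
  set S := Phi (Xᵀ * gradf X)
  have hS : Sᵀ = S := transpose_Phi _
  have hHg_apply (D : Matrix (Fin n) (Fin p) ℝ) :
      Hg D = tangentProj X (Hf X (tangentProj X D)) + mulAmapDeriv₂ X D (X * S) := by
    rw [hessian_g_apply hX (fun Y => (hgradg Y).eq_mulAmapDeriv hgradf) (hHf X) hHg,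
      sub_eq_zero.mp hstat, mulAmapDeriv_of_stiefel hX, mulAmapDeriv_of_stiefel hX]
  have hHh_apply := hessian_hpen_apply hX (fun Y => (hgradg Y).eq_add_penalty (hgradh Y)) hHg hHh
  have hHh_tangent {D : Matrix (Fin n) (Fin p) ℝ} (hD : Phi (Xᵀ * D) = 0) :
      Hh D = tangentProj X (Hf X D - D * S) :=
    hessian_hpen_of_Phi_eq_zero hX hS hHg_apply hHh_apply hD
  refine ⟨fun σ D hD _ heig => ?_, fun σ ⟨D, hD0, heig⟩ => ?_⟩
  · rw [Phi_transpose_mul_comm] at hD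
    exact (hHh_tangent hD).trans heig
  by_cases hDt : tangentProj X D = 0
  · right
    have hnormal : D = X * Phi (Xᵀ * D) := sub_eq_zero.mp hDt
    have hHgD : Hg D = (σ - 2 * β) • D := by
      rw [sub_smul, eq_sub_iff_add_eq, ← heig, hHh_apply D, ← hnormal]
    have habs := (abs_le_opNorm_of_apply_eq_smul hD0 hHgD).trans hM₂
    linarith [neg_abs_le (σ - 2 * β)]
  · left
    have hTt := Phi_mul_tangentProj hX D
    refine ⟨tangentProj X D, hDt, by rwa [Phi_transpose_mul_comm], ?_⟩
    refine (hHh_tangent hTt).symm.trans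
      (apply_tangentProj_eq_smul hX (fun W hW => ?_) (fun N hN => ?_) heig)
    · rw [hHh_tangent hW]
      exact Phi_mul_tangentProj hX _
    · rw [hessian_hpen_mul_of_transpose_eq hX hS hHg_apply hHh_apply hN]
      exact tangentProj_mul_of_transpose_eq hX (by simp [hS, hN, add_comm])

theorem statement_10 {n p : ℕ} (f : Matrix (Fin n) (Fin p) ℝ → ℝ) (β M₂ : ℝ)
    (gradf gradg gradh : Matrix (Fin n) (Fin p) ℝ → Matrix (Fin n) (Fin p) ℝ)
    (Hf : Matrix (Fin n) (Fin p) ℝ → Matrix (Fin n) (Fin p) ℝ →L[ℝ] Matrix (Fin n) (Fin p) ℝ)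
    (hgradf : ∀ Y, HasGradAt f Y (gradf Y))
    (hHf : ∀ Y, HasFDerivAt gradf (Hf Y) Y)
    (hHfCont : Continuous Hf)
    (hgradg : ∀ Y, HasGradAt (g f) Y (gradg Y))
    (hgradh : ∀ Y, HasGradAt (hpen f β) Y (gradh Y))
    (X : Matrix (Fin n) (Fin p) ℝ) (hX : Xᵀ * X = 1)
    (hstat : gradf X - X * Phi (Xᵀ * gradf X) = 0)
    (Hg : Matrix (Fin n) (Fin p) ℝ →L[ℝ] Matrix (Fin n) (Fin p) ℝ)
    (hHg : HasFDerivAt gradg Hg X) (hM₂ : (ContinuousLinearMap.hasOpNorm (σ₁₂ := RingHom.id ℝ)).norm Hg ≤ M₂)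
    (Hh : Matrix (Fin n) (Fin p) ℝ →L[ℝ] Matrix (Fin n) (Fin p) ℝ)
    (hHh : HasFDerivAt gradh Hh X) :
    (∀ (σ : ℝ) (D : Matrix (Fin n) (Fin p) ℝ), Phi (Dᵀ * X) = 0 → D ≠ 0 →
      ((Hf X D - D * Phi (Xᵀ * gradf X))
          - X * Phi (Xᵀ * (Hf X D - D * Phi (Xᵀ * gradf X)))) = σ • D →
      Hh D = σ • D) ∧
    (∀ σ : ℝ, (∃ D : Matrix (Fin n) (Fin p) ℝ, D ≠ 0 ∧ Hh D = σ • D) →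
      (∃ D' : Matrix (Fin n) (Fin p) ℝ, D' ≠ 0 ∧ Phi (D'ᵀ * X) = 0 ∧
        ((Hf X D' - D' * Phi (Xᵀ * gradf X))
            - X * Phi (Xᵀ * (Hf X D' - D' * Phi (Xᵀ * gradf X)))) = σ • D') ∨
      2 * β - M₂ ≤ σ) :=
  statement_10_general f β M₂ gradf gradg gradh Hf hgradf hHf hgradg hgradh X hX hstat Hg hHg hM₂ Hh
    hHh

end ExPen
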